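/- arXiv:1901.09855 — 2 statements merged into one kernel-verified Lean document; each statement's English description precedes it below -/
import Mathlib

section
/- Matrix mutation preserves skew-symmetrizability: if B is an I × I matrix and d = (d_i) are positive integers with b_{ij} d_j = -b_{ji} d_i for all i, j, then for any index k, the mutated matrix B' with b'_{ij} = -b_{ij} if i = k or j = k, b'_{ij} = b_{ij} if b_{ik} b_{kj} ≤ 0, and b'_{ij} = b_{ij} + |b_{ik}| b_{kj} if b_{ik} b_{kj} > 0, again satisfies b'_{ij} d_j = -b'_{ji} d_i for all i, j. -/
/-- Matrix mutation preserves skew-symmetrizability: if `B` is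
skew-symmetrized by positive integers `d` (`b_{ij} d_j = -b_{ji} d_i`) and `B'` is the
mutation of `B` at an index `k`, then `B'` is again skew-symmetrized by `d`. -/
theorem stmt16 {I : Type*} [DecidableEq I] (B B' : I → I → ℚ) (d : I → ℤ)
    (hd : ∀ i, 0 < d i)
    (hskew : ∀ i j, B i j * (d j : ℚ) = -(B j i * (d i : ℚ)))
    (k : I)
    (hB' : ∀ i j, B' i j =
      if i = k ∨ j = k then -B i j
      else if 0 < B i k * B k j then B i j + |B i k| * B k j
      else B i j) :
    ∀ i j, B' i j * (d j : ℚ) = -(B' j i * (d i : ℚ)) := by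
  intro i j
  have hdq : ∀ m, (0:ℚ) < (d m : ℚ) := fun m => by exact_mod_cast hd m
  rw [hB' i j, hB' j i]
  by_cases h1 : i = k ∨ j = k
  · have h2 : j = k ∨ i = k := h1.symm
    simp only [if_pos h1, if_pos h2]
    linarith [hskew i j]
  · have h2 : ¬(j = k ∨ i = k) := fun h => h1 h.symm
    simp only [if_neg h1, if_neg h2]
    have e1 := hskew k i
    have e2 := hskew k j
    have key : (B j k * B k i) * ((d i : ℚ) * (d k : ℚ))
        = (B i k * B k j) * ((d j : ℚ) * (d k : ℚ)) := by
      linear_combination (B j k * (d k : ℚ)) * e1 - (B i k * (d k : ℚ)) * e2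
    have hiff : (0 < B i k * B k j) ↔ (0 < B j k * B k i) := by
      constructor <;> intro h
      · nlinarith [key, mul_pos (hdq i) (hdq k), mul_pos h (mul_pos (hdq j) (hdq k))]
      · nlinarith [key, mul_pos (hdq j) (hdq k), mul_pos h (mul_pos (hdq i) (hdq k))]
    by_cases hc : 0 < B i k * B k j
    · rw [if_pos hc, if_pos (hiff.mp hc)]
      rcases lt_trichotomy (B i k) 0 with hik | hik | hik
      · have hkj : B k j < 0 := by nlinarith
        have hjk : 0 < B j k := by nlinarith [hdq j, hdq k]
        rw [abs_of_neg hik, abs_of_pos hjk]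
        linear_combination hskew i j - B i k * hskew k j + B j k * hskew k i
      · exfalso; rw [hik] at hc; simp at hc
      · have hkj : 0 < B k j := by nlinarith
        have hjk : B j k < 0 := by nlinarith [hdq j, hdq k]
        rw [abs_of_pos hik, abs_of_neg hjk]
        linear_combination hskew i j + B i k * hskew k j - B j k * hskew k i
    · rw [if_neg hc, if_neg (fun h => hc (hiff.mpr h))]
      exact hskew i j
end

section
/- Mutation invariance of linear grading constraints: let B be a skew-symmetrizable I × I matrix, k ∈ I, and let (v_j)_{j ∈ I} be vectors in a rational vector space satisfying Σ_j b_{kj} v_j = 0 for the mutation index k (i.e., both exchange monomials have equal weight Σ_{b_{kj}>0} b_{kj} v_j = Σ_{b_{kj}<0} (-b_{kj}) v_j, and the new variable gets weight v'_k = -v_k + Σ_{b_{kj}>0} b_{kj} v_j, with v'_j = v_j for j ≠ k). Then for every index i, Σ_j b'_{ij} v'_j = Σ_j b_{ij} v_j, where B' is the mutation of B at k. -/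
/-! Writing `P = ∑_{b_{kj} > 0} b_{kj} v_j` and `N = ∑_{b_{kj} < 0} b_{kj} v_j`, homogeneity says
`N = -P`. For `i ≠ k` the correction `|b_{ik}| b_{kj}` of `b'_{ij}` is nonzero exactly when
`b_{kj}` has the sign of `b_{ik}`, so it contributes `b_{ik} P` whatever that sign is; this cancels
the `-b_{ik} P` coming from `b'_{ik} v'_k = -b_{ik} (-v_k + P)`. For `i = k` the row simply changes
sign, and `∑_j b_{kj} v_j = 0`; in both cases `b_{kk} = 0` keeps the diagonal term out of the way. -/

open Finset

theorem skewSymmetrizable_diag_eq_zero {I : Type*} {B : I → I → ℚ} {d : I → ℤ}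
    (hskew : ∀ i j, B i j * (d j : ℚ) = -(B j i * (d i : ℚ))) {k : I} (hk : d k ≠ 0) :
    B k k = 0 := by
  have h : 2 * B k k * (d k : ℚ) = 0 := by linarith [hskew k k]
  simpa [hk] using h

section HomogeneousSums

variable {K ι M : Type*} [Ring K] [LinearOrder K]
  [AddCommGroup M] [Module K M] {s : Finset ι} {f : ι → K} {w : ι → M}

theorem sum_filter_neg_smul_eq_neg_sum_filter_pos (h : ∑ j ∈ s, f j • w j = 0) :
    ∑ j ∈ s with f j < 0, f j • w j = -∑ j ∈ s with 0 < f j, f j • w j := by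
  rw [eq_neg_iff_add_eq_zero, ← h, add_comm, ← sum_filter_add_sum_filter_not s (fun j => 0 < f j)]
  congr 1
  rw [sum_filter, sum_filter]
  refine sum_congr rfl fun j _ => ?_
  rcases lt_trichotomy (f j) 0 with hj | hj | hj
  · simp [hj, hj.not_gt]
  · simp [hj]
  · simp [hj, hj.not_gt]

theorem sum_filter_mul_pos_smul [IsStrictOrderedRing K] (h : ∑ j ∈ s, f j • w j = 0) (c : K) :
    ∑ j ∈ s with 0 < c * f j, (|c| * f j) • w j = c • ∑ j ∈ s with 0 < f j, f j • w j := by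
  rcases lt_trichotomy c 0 with hc | rfl | hc
  · have hfilter : s.filter (fun j => 0 < c * f j) = s.filter (fun j => f j < 0) :=
      filter_congr fun j _ => by simp [mul_pos_iff, hc, hc.not_gt]
    simp only [hfilter, abs_of_neg hc, mul_smul]
    rw [← smul_sum, sum_filter_neg_smul_eq_neg_sum_filter_pos h, smul_neg, neg_smul, neg_neg]
  · simp
  · have hfilter : s.filter (fun j => 0 < c * f j) = s.filter (fun j => 0 < f j) :=
      filter_congr fun j _ => mul_pos_iff_of_pos_left hc
    rw [hfilter, abs_of_pos hc]
    simp only [mul_smul, ← smul_sum]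

end HomogeneousSums

section Mutation

variable {I : Type*} [Fintype I] {B B' : I → I → ℚ} {k : I}
  {M : Type*} [AddCommGroup M] [Module ℚ M] {v v' : I → M}

theorem sum_mutation_row_self (hkk : B k k = 0) (hB' : ∀ j, B' k j = -B k j)
    (hv' : ∀ j, j ≠ k → v' j = v j) :
    ∑ j, B' k j • v' j = -∑ j, B k j • v j := by
  rw [← sum_neg_distrib]
  refine sum_congr rfl fun j _ => ?_
  rcases eq_or_ne j k with rfl | hj
  · simp [hB', hkk]
  · rw [hB', hv' j hj, neg_smul]

theorem sum_mutation_row_of_ne [DecidableEq I] (hkk : B k k = 0) (hv : ∑ j, B k j • v j = 0)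
    (hv'k : v' k = -v k + ∑ j with 0 < B k j, B k j • v j) (hv' : ∀ j, j ≠ k → v' j = v j)
    {i : I} (hB' : ∀ j, B' i j = if j = k then -B i k
      else if 0 < B i k * B k j then B i j + |B i k| * B k j else B i j) :
    ∑ j, B' i j • v' j = ∑ j, B i j • v j := by
  set P := ∑ j with 0 < B k j, B k j • v j
  have hcorrection : ∑ j ∈ univ.erase k with 0 < B i k * B k j, (|B i k| * B k j) • v j
      = B i k • P := by
    rw [← sum_filter_mul_pos_smul hv, filter_erase]
    exact sum_erase _ (by simp [hkk])
  have hrest : ∑ j ∈ univ.erase k, B' i j • v' j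
      = ∑ j ∈ univ.erase k, B i j • v j + B i k • P := by
    rw [← hcorrection, sum_filter, ← sum_add_distrib]
    refine sum_congr rfl fun j hj => ?_
    have hjk := ne_of_mem_erase hj
    rw [hB', if_neg hjk, hv' j hjk]
    split_ifs <;> simp [add_smul]
  rw [← add_sum_erase _ _ (mem_univ k), ← add_sum_erase _ _ (mem_univ k), hrest, hB', if_pos rfl,
    hv'k]
  simp only [smul_add, neg_smul, smul_neg, neg_neg]
  abel

end Mutation

/-- Mutation invariance of linear grading constraints: if `B` is
skew-symmetrizable, `B' = μ_k(B)` its mutation at `k`, and the vectors `(v_j)` satisfy the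
weight-homogeneity condition `∑ j, b_{kj} • v_j = 0`, then with the mutated weights
`v'_k = -v_k + ∑_{b_{kj} > 0} b_{kj} • v_j` and `v'_j = v_j` for `j ≠ k`, one has
`∑ j, b'_{ij} • v'_j = ∑ j, b_{ij} • v_j` for every index `i`. -/
theorem stmt17 {I : Type*} [Fintype I] [DecidableEq I] (B B' : I → I → ℚ) (d : I → ℤ)
    (hd : ∀ i, 0 < d i)
    (hskew : ∀ i j, B i j * (d j : ℚ) = -(B j i * (d i : ℚ)))
    (k : I)
    (hB' : ∀ i j, B' i j =
      if i = k ∨ j = k then -B i j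
      else if 0 < B i k * B k j then B i j + |B i k| * B k j
      else B i j)
    {M : Type*} [AddCommGroup M] [Module ℚ M] (v v' : I → M)
    (hv : ∑ j, B k j • v j = 0)
    (hv'k : v' k = -v k + ∑ j ∈ Finset.univ.filter (fun j => 0 < B k j), B k j • v j)
    (hv' : ∀ j, j ≠ k → v' j = v j) :
    ∀ i, ∑ j, B' i j • v' j = ∑ j, B i j • v j := by
  intro i
  have hkk : B k k = 0 := skewSymmetrizable_diag_eq_zero hskew (hd k).ne'
  rcases eq_or_ne i k with rfl | hik
  · rw [sum_mutation_row_self hkk (fun j => by simp [hB']) hv', hv, neg_zero]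
  · refine sum_mutation_row_of_ne hkk hv hv'k hv' fun j => ?_
    rcases eq_or_ne j k with rfl | hjk
    · simp [hB']
    · simp [hB', hik, hjk]
end
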